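/- arXiv:1207.3967 — 2 statements merged into one kernel-verified Lean document; each statement's English description precedes it below -/
import Mathlib

section
/- The function f(t) = t²/(1 − log t), defined for t ∈ (0, e), is convex, positive, and satisfies lim_{t→0+} f(t) = 0. -/
open Filter Set Real Topology

/-! With `u = 1 - log t`, positive on `(0, e)`, the second derivative of `t² / u` is
`(2u² + 3u + 2) / u³ > 0`. At `0⁺` the numerator tends to `0` and the denominator to `+∞`. -/

lemma one_sub_log_pos_of_mem_Ioo {t : ℝ} (ht : t ∈ Ioo 0 (exp 1)) : 0 < 1 - log t := by
  have : log t < 1 := by simpa using log_lt_log ht.1 ht.2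
  linarith

lemma hasDerivAt_sq_div_one_sub_log {t : ℝ} (ht : t ≠ 0) (hlog : 1 - log t ≠ 0) :
    HasDerivAt (fun t ↦ t ^ 2 / (1 - log t)) (t * (3 - 2 * log t) / (1 - log t) ^ 2) t := by
  refine ((hasDerivAt_pow 2 t).div ((hasDerivAt_const t 1).sub (hasDerivAt_log ht)) hlog
    ).congr_deriv ?_
  simp only [Pi.sub_apply]
  field_simp
  ring

lemma hasDerivAt_deriv_sq_div_one_sub_log {t : ℝ} (ht : t ≠ 0) (hlog : 1 - log t ≠ 0) :
    HasDerivAt (fun t ↦ t * (3 - 2 * log t) / (1 - log t) ^ 2)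
      ((2 * (1 - log t) ^ 2 + 3 * (1 - log t) + 2) / (1 - log t) ^ 3) t := by
  have hlog' := hasDerivAt_log ht
  refine (((hasDerivAt_id t).mul ((hasDerivAt_const t 3).sub (hlog'.const_mul 2))).div
    (((hasDerivAt_const t 1).sub hlog').pow 2) (pow_ne_zero 2 hlog)).congr_deriv ?_
  simp only [Pi.sub_apply, Pi.mul_apply, Pi.pow_apply, id]
  field_simp
  ring

lemma convexOn_sq_div_one_sub_log :
    ConvexOn ℝ (Ioo 0 (exp 1)) (fun t ↦ t ^ 2 / (1 - log t)) := by
  have hderiv {t : ℝ} (ht : t ∈ Ioo 0 (exp 1)) :=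
    hasDerivAt_sq_div_one_sub_log ht.1.ne' (one_sub_log_pos_of_mem_Ioo ht).ne'
  have hderiv2 {t : ℝ} (ht : t ∈ Ioo 0 (exp 1)) :=
    hasDerivAt_deriv_sq_div_one_sub_log ht.1.ne' (one_sub_log_pos_of_mem_Ioo ht).ne'
  refine convexOn_of_hasDerivWithinAt2_nonneg (convex_Ioo _ _)
    (fun t ht ↦ (hderiv ht).continuousAt.continuousWithinAt)
    (fun t ht ↦ (hderiv (interior_subset ht)).hasDerivWithinAt)
    (fun t ht ↦ (hderiv2 (interior_subset ht)).hasDerivWithinAt) fun t ht ↦ ?_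
  have := one_sub_log_pos_of_mem_Ioo (interior_subset ht)
  positivity

lemma tendsto_sq_div_one_sub_log_nhdsGT_zero :
    Tendsto (fun t ↦ t ^ 2 / (1 - log t)) (𝓝[>] 0) (𝓝 0) := by
  have hsq : Tendsto (fun t : ℝ ↦ t ^ 2) (𝓝[>] 0) (𝓝 0) := by
    simpa using ((continuous_pow 2).tendsto (0 : ℝ)).mono_left nhdsWithin_le_nhds
  have hdenom : Tendsto (fun t ↦ 1 - log t) (𝓝[>] 0) atTop :=
    tendsto_atTop_add_const_left _ 1 (tendsto_neg_atBot_atTop.comp tendsto_log_nhdsGT_zero)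
  simpa [div_eq_mul_inv] using hsq.mul hdenom.inv_tendsto_atTop

/-- The function `f(t) = t² / (1 - log t)` is convex and positive on `(0, e)`,
and `f(t) → 0` as `t → 0+`. -/
theorem stmt_4 :
    ConvexOn ℝ (Set.Ioo 0 (Real.exp 1)) (fun t : ℝ => t ^ 2 / (1 - Real.log t)) ∧
    (∀ t ∈ Set.Ioo (0:ℝ) (Real.exp 1), 0 < t ^ 2 / (1 - Real.log t)) ∧
    Tendsto (fun t : ℝ => t ^ 2 / (1 - Real.log t)) (nhdsWithin 0 (Set.Ioi 0)) (nhds 0) :=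
  ⟨convexOn_sq_div_one_sub_log,
    fun _ ht ↦ div_pos (pow_pos ht.1 2) (one_sub_log_pos_of_mem_Ioo ht),
    tendsto_sq_div_one_sub_log_nhdsGT_zero⟩
end

section
/- Let M be an Orlicz function with M(1)=1, let 1 ≤ q < p, and suppose there is C ∈ (0,1] with M(λt) ≥ C·M(λ)·t^q for all λ > 0 and t ∈ (0,1]. Define a_n = 2^{n+2} M(2^{−(n+1)})^{1/p} for n ∈ ℤ, let f_n : ℝ → [0,∞) be the tent function with f_n(t) = a_n t on [0, 2^{−n}], f_n(t) = −a_n(t − 2^{−(n−1)}) on (2^{−n}, 2^{−(n−1)}], and f_n = 0 elsewhere, and set f_{n,k}(t) = f_n(t − (k−1)/2^{n+1}) for k ∈ ℤ. Then there is a constant A ≥ 1 (one may take A = 8·4^p(1 + C⁻¹/(1 − 2^{1−p/q}))) such that for all s, t ∈ ℝ: M(|s−t|) ≤ ∑_{n,k ∈ ℤ} |f_{n,k}(s) − f_{n,k}(t)|^p ≤ A·M(|s−t|). -/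
/-!
Write `d = |s - t|` and choose `m` with `2^{-(m+1)} ≤ d ≤ 2^{-m}`. At level `n` only the translates
whose support meets `s` or `t` contribute (at most eight of them), each by at most
`(a_n min(d, 2^{-n}))^p`. For `n ≥ m` the height bound and convexity (`M x / x` is nondecreasing)
give `4^p M(d) 2^{-(n-m)}`; for `n < m` the Lipschitz bound and `M(λt) ≥ C M(λ) t^q` give
`4^p C⁻¹ M(d) 2^{-(p-q)(m-n)}`. Both are geometric in `|n - m|`, which yields the upper bound.
For the lower bound, at level `m - 1` some translate is linear on an interval containing `s` and
`t`, and its increment alone is at least `M(2^{-m}) ≥ M(d)`.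
-/

open Filter Set Real

/-- The coefficient `a_n = 2^{n+2} M(2^{-(n+1)})^{1/p}`. -/
noncomputable def tentCoeff (M : ℝ → ℝ) (p : ℝ) (n : ℤ) : ℝ :=
  (2:ℝ) ^ (n + 2) * (M ((2:ℝ) ^ (-(n + 1)))) ^ (1 / p)

/-- The tent function `f_n` of slope `a`, supported on `[0, 2^{-(n-1)}]`. -/
noncomputable def tent (a : ℝ) (n : ℤ) (t : ℝ) : ℝ :=
  if t ∈ Set.Icc (0:ℝ) ((2:ℝ) ^ (-n)) then a * t
  else if t ∈ Set.Ioc ((2:ℝ) ^ (-n)) ((2:ℝ) ^ (-(n - 1))) then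
    -a * (t - (2:ℝ) ^ (-(n - 1)))
  else 0

/-- The translated tent function `f_{n,k}(t) = f_n(t - (k-1)/2^{n+1})`. -/
noncomputable def tentNK (M : ℝ → ℝ) (p : ℝ) (n k : ℤ) (t : ℝ) : ℝ :=
  tent (tentCoeff M p n) n (t - ((k:ℝ) - 1) / (2:ℝ) ^ (n + 1))

lemma two_zpow_neg_sub_one (n : ℤ) : (2:ℝ) ^ (-(n - 1)) = 2 * 2 ^ (-n) := by
  rw [show -(n - 1) = 1 + -n by ring, zpow_add₀ two_ne_zero, zpow_one]

lemma tent_eq_mul_max_min (a : ℝ) (n : ℤ) (t : ℝ) :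
    tent a n t = a * max 0 (min t (2 ^ (-(n - 1)) - t)) := by
  have h2 := two_zpow_neg_sub_one n
  unfold tent
  simp only [Set.mem_Icc, Set.mem_Ioc]
  split_ifs with hup hdown
  · rw [min_eq_left (by linarith [hup.2]), max_eq_right hup.1]
  · rw [min_eq_right (by linarith [hdown.1]), max_eq_right (by linarith [hdown.2])]
    ring
  · push Not at hup hdown
    rcases le_or_gt 0 t with ht | ht
    · rw [max_eq_left (by linarith [min_le_right t (2 ^ (-(n - 1)) - t), hdown (hup ht)]),
        mul_zero]
    · rw [max_eq_left (by linarith [min_le_left t (2 ^ (-(n - 1)) - t)]), mul_zero]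

lemma tent_nonneg {a : ℝ} (ha : 0 ≤ a) (n : ℤ) (t : ℝ) : 0 ≤ tent a n t := by
  rw [tent_eq_mul_max_min]
  exact mul_nonneg ha (le_max_left _ _)

lemma tent_le {a : ℝ} (ha : 0 ≤ a) (n : ℤ) (t : ℝ) : tent a n t ≤ a * 2 ^ (-n) := by
  rw [tent_eq_mul_max_min]
  have h2 := two_zpow_neg_sub_one n
  refine mul_le_mul_of_nonneg_left (max_le (zpow_pos two_pos _).le ?_) ha
  rcases le_total t (2 ^ (-(n - 1)) - t) with h | h
  · rw [min_eq_left h]; linarith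
  · rw [min_eq_right h]; linarith

lemma abs_tent_sub_le_height {a : ℝ} (ha : 0 ≤ a) (n : ℤ) (x y : ℝ) :
    |tent a n x - tent a n y| ≤ a * 2 ^ (-n) :=
  abs_sub_le_iff.2 ⟨by linarith [tent_le ha n x, tent_nonneg ha n y],
    by linarith [tent_le ha n y, tent_nonneg ha n x]⟩

lemma abs_tent_sub_le {a : ℝ} (ha : 0 ≤ a) (n : ℤ) (x y : ℝ) :
    |tent a n x - tent a n y| ≤ a * |x - y| := by
  rw [tent_eq_mul_max_min, tent_eq_mul_max_min, ← mul_sub, abs_mul, abs_of_nonneg ha]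
  refine mul_le_mul_of_nonneg_left ?_ ha
  set c : ℝ := 2 ^ (-(n - 1))
  calc |max 0 (min x (c - x)) - max 0 (min y (c - y))|
      ≤ max |(0:ℝ) - 0| |min x (c - x) - min y (c - y)| := abs_max_sub_max_le_max _ _ _ _
    _ ≤ |x - y| := by
        refine max_le (by simp) ((abs_min_sub_min_le_max _ _ _ _).trans (max_le le_rfl ?_))
        rw [show c - x - (c - y) = -(x - y) by ring, abs_neg]

lemma pos_and_lt_of_tent_ne_zero {a : ℝ} {n : ℤ} {t : ℝ} (h : tent a n t ≠ 0) :
    0 < t ∧ t < 2 ^ (-(n - 1)) := by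
  rw [tent_eq_mul_max_min] at h
  constructor <;> by_contra! hle <;> refine h ?_
  · rw [max_eq_left ((min_le_left _ _).trans hle), mul_zero]
  · rw [max_eq_left (by linarith [min_le_right t (2 ^ (-(n - 1)) - t)]), mul_zero]

lemma tent_of_mem_Icc {a : ℝ} {n : ℤ} {t : ℝ} (ht : t ∈ Icc (0:ℝ) (2 ^ (-n))) :
    tent a n t = a * t :=
  if_pos ht

lemma tentCoeff_nonneg {M : ℝ → ℝ} (p : ℝ) {n : ℤ} (hM : 0 ≤ M (2 ^ (-(n + 1)))) :
    0 ≤ tentCoeff M p n :=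
  mul_nonneg (zpow_pos two_pos _).le (rpow_nonneg hM _)

lemma rpow_tentCoeff_mul {M : ℝ → ℝ} {p : ℝ} (hp : p ≠ 0) {n : ℤ}
    (hM : 0 ≤ M (2 ^ (-(n + 1)))) {x : ℝ} (hx : 0 ≤ x) :
    (tentCoeff M p n * x) ^ p = 2 ^ p * (x / 2 ^ (-(n + 1))) ^ p * M (2 ^ (-(n + 1))) := by
  have hscale : (2:ℝ) ^ (n + 2) * x = 2 * (x / 2 ^ (-(n + 1))) := by
    rw [zpow_neg, div_inv_eq_mul, show n + 2 = n + 1 + 1 by ring, zpow_add_one₀ two_ne_zero]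
    ring
  have h2x : 0 ≤ x / 2 ^ (-(n + 1)) := div_nonneg hx (zpow_pos two_pos _).le
  unfold tentCoeff
  rw [mul_right_comm, hscale, mul_rpow (by positivity) (rpow_nonneg hM _),
    mul_rpow zero_le_two h2x, ← rpow_mul hM, one_div_mul_cancel hp, rpow_one]

lemma abs_tentNK_sub_le_height {M : ℝ → ℝ} {p : ℝ} {n : ℤ} (ha : 0 ≤ tentCoeff M p n)
    (k : ℤ) (x y : ℝ) : |tentNK M p n k x - tentNK M p n k y| ≤ tentCoeff M p n * 2 ^ (-n) :=
  abs_tent_sub_le_height ha n _ _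

lemma abs_tentNK_sub_le {M : ℝ → ℝ} {p : ℝ} {n : ℤ} (ha : 0 ≤ tentCoeff M p n)
    (k : ℤ) (x y : ℝ) : |tentNK M p n k x - tentNK M p n k y| ≤ tentCoeff M p n * |x - y| := by
  have h := abs_tent_sub_le ha n (x - (k - 1) / 2 ^ (n + 1)) (y - (k - 1) / 2 ^ (n + 1))
  rwa [sub_sub_sub_cancel_right] at h

noncomputable def tentWindow (n : ℤ) (x : ℝ) : Finset ℤ :=
  Finset.Icc (⌊x * 2 ^ (n + 1)⌋ - 2) (⌊x * 2 ^ (n + 1)⌋ + 1)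

lemma card_tentWindow (n : ℤ) (x : ℝ) : (tentWindow n x).card = 4 := by
  simp only [tentWindow, Int.card_Icc]
  omega

lemma mem_tentWindow_of_tentNK_ne_zero {M : ℝ → ℝ} {p : ℝ} {n k : ℤ} {x : ℝ}
    (h : tentNK M p n k x ≠ 0) : k ∈ tentWindow n x := by
  obtain ⟨hleft, hright⟩ := pos_and_lt_of_tent_ne_zero h
  have hpow : (0:ℝ) < 2 ^ (n + 1) := zpow_pos two_pos _
  have hsupp : (2:ℝ) ^ (-(n - 1)) * 2 ^ (n + 1) = 4 := by
    rw [← zpow_add₀ two_ne_zero, show -(n - 1) + (n + 1) = 2 by ring]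
    norm_num
  have hlo : (k:ℝ) - 1 < x * 2 ^ (n + 1) := by
    rwa [sub_pos, div_lt_iff₀ hpow] at hleft
  have hhi : x * 2 ^ (n + 1) < k + 3 := by
    rw [sub_lt_iff_lt_add] at hright
    have := mul_lt_mul_of_pos_right hright hpow
    rw [add_mul, div_mul_cancel₀ _ hpow.ne', hsupp] at this
    linarith
  have hfloor_lo : k - 1 ≤ ⌊x * 2 ^ (n + 1)⌋ := Int.le_floor.2 (by push_cast; linarith)
  have hfloor_hi : ⌊x * 2 ^ (n + 1)⌋ < k + 3 := Int.floor_lt.2 (by push_cast; linarith)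
  simp only [tentWindow, Finset.mem_Icc]
  omega

lemma exists_abs_tentNK_sub_eq (M : ℝ → ℝ) (p : ℝ) {n : ℤ} (ha : 0 ≤ tentCoeff M p n)
    {x y : ℝ} (hxy : |x - y| ≤ 2 ^ (-(n + 1))) :
    ∃ k : ℤ, |tentNK M p n k x - tentNK M p n k y| = tentCoeff M p n * |x - y| := by
  wlog hyx : y ≤ x generalizing x y
  · obtain ⟨k, hk⟩ := this (by rwa [abs_sub_comm]) (le_of_not_ge hyx)
    exact ⟨k, by rwa [abs_sub_comm, abs_sub_comm x]⟩
  set e : ℝ := 2 ^ (-(n + 1)) with he_def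
  have he : 0 < e := zpow_pos two_pos _
  have hcancel : (2:ℝ) ^ (n + 1) * e = 1 := by
    rw [he_def, zpow_neg, mul_inv_cancel₀ (zpow_ne_zero _ two_ne_zero)]
  set j := ⌊y * 2 ^ (n + 1)⌋
  have hjy : j * e ≤ y := by
    have := mul_le_mul_of_nonneg_right (Int.floor_le (y * 2 ^ (n + 1))) he.le
    rwa [mul_assoc, hcancel, mul_one] at this
  have hyj : y < j * e + e := by
    have := mul_lt_mul_of_pos_right (Int.lt_floor_add_one (y * 2 ^ (n + 1))) he
    rwa [mul_assoc, hcancel, mul_one, add_mul, one_mul] at this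
  have hwidth : (2:ℝ) ^ (-n) = 2 * e := by
    have := two_zpow_neg_sub_one (n + 1)
    rwa [add_sub_cancel_right] at this
  have hrise : ∀ z, j * e ≤ z → z ≤ j * e + 2 * e → tentNK M p n (j + 1) z
      = tentCoeff M p n * (z - j * e) := by
    intro z hz1 hz2
    have hshift : ((j + 1 : ℤ) - 1 : ℝ) / 2 ^ (n + 1) = j * e := by
      rw [he_def, zpow_neg]; push_cast; ring
    rw [tentNK, hshift]
    exact tent_of_mem_Icc ⟨by linarith, by linarith⟩
  rw [abs_of_nonneg (sub_nonneg.2 hyx)] at hxy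
  refine ⟨j + 1, ?_⟩
  rw [hrise x (by linarith) (by linarith), hrise y hjy (by linarith), ← mul_sub,
    sub_sub_sub_cancel_right, abs_mul, abs_of_nonneg ha]

lemma ConvexOn.le_div_mul_of_map_zero {M : ℝ → ℝ} (hconv : ConvexOn ℝ (Ici 0) M)
    (h0 : M 0 = 0) {x y : ℝ} (hx : 0 < x) (hxy : x ≤ y) : M x ≤ x / y * M y := by
  have hy : 0 < y := hx.trans_le hxy
  have h := hconv.secant_mono self_mem_Ici hx.le hy.le hx.ne' hy.ne' hxy
  simp only [h0, sub_zero] at h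
  rw [div_le_div_iff₀ hx hy] at h
  rw [div_mul_eq_mul_div, le_div_iff₀ hy]
  linarith

noncomputable def tentIncr (M : ℝ → ℝ) (p s t : ℝ) (nk : ℤ × ℤ) : ℝ :=
  |tentNK M p nk.1 nk.2 s - tentNK M p nk.1 nk.2 t| ^ p

lemma tentIncr_nonneg (M : ℝ → ℝ) (p s t : ℝ) (nk : ℤ × ℤ) : 0 ≤ tentIncr M p s t nk :=
  rpow_nonneg (abs_nonneg _) _

lemma tentIncr_le_of_le {M : ℝ → ℝ} (hM : ∀ x, 0 ≤ x → 0 ≤ M x)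
    (hconv : ConvexOn ℝ (Ici 0) M) (h0 : M 0 = 0) {p : ℝ} (hp : 0 < p) {s t : ℝ} {m n : ℤ}
    (hm : 2 ^ (-(m + 1)) ≤ |s - t|) (hmn : m ≤ n) (k : ℤ) :
    tentIncr M p s t (n, k) ≤ 4 ^ p * M |s - t| * (1 / 2) ^ (n - m).natAbs := by
  set l : ℝ := 2 ^ (-(n + 1)) with hl_def
  have hl : 0 < l := zpow_pos two_pos _
  have hld : l ≤ |s - t| := (zpow_le_zpow_right₀ one_le_two (by omega)).trans hm
  have hMl := hM l hl.le
  have hheight : (2:ℝ) ^ (-n) / l = 2 := by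
    rw [div_eq_iff hl.ne', hl_def, ← zpow_one_add₀ two_ne_zero, show 1 + -(n + 1) = -n by ring]
  have hratio : l / |s - t| ≤ (1 / 2) ^ (n - m).natAbs :=
    calc l / |s - t| ≤ l / 2 ^ (-(m + 1)) := div_le_div_of_nonneg_left hl.le (zpow_pos two_pos _) hm
      _ = (1 / 2) ^ (n - m).natAbs := by
        rw [hl_def, ← zpow_sub₀ two_ne_zero, one_div, inv_pow, ← zpow_natCast,
          Int.natAbs_of_nonneg (by omega), ← zpow_neg]
        ring_nf
  calc tentIncr M p s t (n, k) ≤ (tentCoeff M p n * 2 ^ (-n)) ^ p :=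
        rpow_le_rpow (abs_nonneg _) (abs_tentNK_sub_le_height (tentCoeff_nonneg p hMl) k s t) hp.le
    _ = 4 ^ p * M l := by
        rw [rpow_tentCoeff_mul hp.ne' hMl (zpow_pos two_pos _).le, hheight,
          ← mul_rpow zero_le_two zero_le_two]
        congr 2
        norm_num
    _ ≤ 4 ^ p * (l / |s - t| * M |s - t|) := by
        gcongr
        exact hconv.le_div_mul_of_map_zero h0 hl hld
    _ = 4 ^ p * M |s - t| * (l / |s - t|) := by ring
    _ ≤ 4 ^ p * M |s - t| * (1 / 2) ^ (n - m).natAbs :=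
        mul_le_mul_of_nonneg_left hratio (mul_nonneg (by positivity) (hM _ (abs_nonneg _)))

lemma tentIncr_le_of_lt {M : ℝ → ℝ} (hM : ∀ x, 0 ≤ x → 0 ≤ M x) {p q C : ℝ} (hq : 0 ≤ q)
    (hqp : q < p) (hC0 : 0 < C)
    (hhom : ∀ l : ℝ, 0 < l → ∀ t ∈ Set.Ioc (0:ℝ) 1, C * (M l * t ^ q) ≤ M (l * t))
    {s t : ℝ} {m n : ℤ} (hd : 0 < |s - t|) (hm : |s - t| ≤ 2 ^ (-m)) (hnm : n < m) (k : ℤ) :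
    tentIncr M p s t (n, k) ≤ 4 ^ p * C⁻¹ * M |s - t| * ((1 / 2) ^ (p - q)) ^ (n - m).natAbs := by
  have hp : 0 < p := by linarith
  set d := |s - t|
  set l : ℝ := 2 ^ (-(n + 1)) with hl_def
  have hl : 0 < l := zpow_pos two_pos _
  have hdl : d ≤ l := hm.trans (zpow_le_zpow_right₀ one_le_two (by omega))
  have hx : 0 < d / l := div_pos hd hl
  have hMl := hM l hl.le
  have hscaling : M l * (d / l) ^ q ≤ C⁻¹ * M d := by
    have h := hhom l hl (d / l) ⟨hx, (div_le_one hl).2 hdl⟩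
    rwa [mul_div_cancel₀ _ hl.ne', ← le_inv_mul_iff₀ hC0] at h
  have hratio : d / l ≤ 2 * (1 / 2) ^ (n - m).natAbs :=
    calc d / l ≤ 2 ^ (-m) / l := div_le_div_of_nonneg_right hm hl.le
      _ = 2 * (1 / 2) ^ (n - m).natAbs := by
        rw [hl_def, ← zpow_sub₀ two_ne_zero, one_div, inv_pow, ← Int.natAbs_neg, neg_sub,
          ← zpow_natCast, Int.natAbs_of_nonneg (by omega), ← zpow_neg, ← zpow_one_add₀ two_ne_zero]
        ring_nf
  have hsplit : (d / l) ^ p = (d / l) ^ (p - q) * (d / l) ^ q := by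
    rw [← rpow_add hx, sub_add_cancel]
  have hconst : (2:ℝ) ^ p * 2 ^ (p - q) ≤ 4 ^ p :=
    calc (2:ℝ) ^ p * 2 ^ (p - q) ≤ 2 ^ p * 2 ^ p :=
          mul_le_mul_of_nonneg_left (rpow_le_rpow_of_exponent_le one_le_two (by linarith))
            (by positivity)
      _ = 4 ^ p := by rw [← mul_rpow zero_le_two zero_le_two]; norm_num
  have hMd : 0 ≤ C⁻¹ * M d := mul_nonneg (inv_nonneg.2 hC0.le) (hM d hd.le)
  calc tentIncr M p s t (n, k) ≤ (tentCoeff M p n * d) ^ p :=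
        rpow_le_rpow (abs_nonneg _) (abs_tentNK_sub_le (tentCoeff_nonneg p hMl) k s t) hp.le
    _ = 2 ^ p * (d / l) ^ (p - q) * (M l * (d / l) ^ q) := by
        rw [rpow_tentCoeff_mul hp.ne' hMl hd.le, hsplit]
        ring
    _ ≤ 2 ^ p * (2 * (1 / 2) ^ (n - m).natAbs) ^ (p - q) * (C⁻¹ * M d) := by
        gcongr
    _ = 2 ^ p * 2 ^ (p - q) * (C⁻¹ * M d) * ((1 / 2) ^ (p - q)) ^ (n - m).natAbs := by
        rw [mul_rpow zero_le_two (by positivity), ← rpow_pow_comm (by norm_num)]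
        ring
    _ ≤ 4 ^ p * (C⁻¹ * M d) * ((1 / 2) ^ (p - q)) ^ (n - m).natAbs := by
        gcongr
    _ = 4 ^ p * C⁻¹ * M d * ((1 / 2) ^ (p - q)) ^ (n - m).natAbs := by ring

noncomputable def tentBoundConst (p C : ℝ) : ℝ := 4 ^ p * max 1 C⁻¹

noncomputable def tentDecayRatio (p q : ℝ) : ℝ := max (1 / 2) ((1 / 2) ^ (p - q))

lemma tentDecayRatio_nonneg (p q : ℝ) : 0 ≤ tentDecayRatio p q :=
  le_max_of_le_left (by norm_num)

lemma tentDecayRatio_lt_one {p q : ℝ} (hqp : q < p) : tentDecayRatio p q < 1 :=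
  max_lt (by norm_num) (rpow_lt_one (by norm_num) (by norm_num) (by linarith))

lemma tentIncr_le {M : ℝ → ℝ} (hM : ∀ x, 0 ≤ x → 0 ≤ M x) (hconv : ConvexOn ℝ (Ici 0) M)
    (h0 : M 0 = 0) {p q C : ℝ} (hq : 0 ≤ q) (hqp : q < p) (hC0 : 0 < C)
    (hhom : ∀ l : ℝ, 0 < l → ∀ t ∈ Set.Ioc (0:ℝ) 1, C * (M l * t ^ q) ≤ M (l * t))
    {s t : ℝ} {m : ℤ} (hd : 0 < |s - t|) (hm1 : 2 ^ (-(m + 1)) ≤ |s - t|)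
    (hm2 : |s - t| ≤ 2 ^ (-m)) (n k : ℤ) :
    tentIncr M p s t (n, k)
      ≤ tentBoundConst p C * M |s - t| * tentDecayRatio p q ^ (n - m).natAbs := by
  have hMd := hM _ hd.le
  rcases le_or_gt m n with hmn | hnm
  · calc tentIncr M p s t (n, k) ≤ 4 ^ p * 1 * M |s - t| * (1 / 2) ^ (n - m).natAbs := by
          rw [mul_one]; exact tentIncr_le_of_le hM hconv h0 (by linarith) hm1 hmn k
      _ ≤ _ := by
          unfold tentBoundConst tentDecayRatio
          gcongr
          exacts [le_max_left _ _, le_max_left _ _]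
  · calc tentIncr M p s t (n, k)
          ≤ 4 ^ p * C⁻¹ * M |s - t| * ((1 / 2) ^ (p - q)) ^ (n - m).natAbs :=
          tentIncr_le_of_lt hM hq hqp hC0 hhom hd hm2 hnm k
      _ ≤ _ := by
          unfold tentBoundConst tentDecayRatio
          gcongr
          exacts [le_max_right _ _, le_max_right _ _]

lemma summable_and_tsum_le_of_rows {α β : Type*} {F : α × β → ℝ} {B : α → ℝ}
    {S : α → Finset β} {N : ℕ} (hF : ∀ x, 0 ≤ F x) (hS : ∀ a, ∀ b ∉ S a, F (a, b) = 0)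
    (hN : ∀ a, (S a).card ≤ N) (hFB : ∀ a b, F (a, b) ≤ B a) (hB0 : ∀ a, 0 ≤ B a)
    (hB : Summable B) : Summable F ∧ ∑' x, F x ≤ N * ∑' a, B a := by
  have hrow : ∀ a, Summable fun b => F (a, b) := fun a =>
    summable_of_ne_finset_zero (s := S a) (hS a)
  have hrow_le : ∀ a, ∑' b, F (a, b) ≤ N * B a := by
    intro a
    rw [tsum_eq_sum (s := S a) (hS a)]
    calc ∑ b ∈ S a, F (a, b) ≤ (S a).card • B a :=
          Finset.sum_le_card_nsmul _ _ _ fun b _ => hFB a b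
      _ ≤ N * B a := by
          rw [nsmul_eq_mul]
          exact mul_le_mul_of_nonneg_right (by exact_mod_cast hN a) (hB0 a)
  have hrows : Summable fun a => ∑' b, F (a, b) :=
    (hB.mul_left (N:ℝ)).of_nonneg_of_le (fun a => tsum_nonneg fun b => hF _) hrow_le
  have hsum : Summable F := (summable_prod_of_nonneg fun x => hF x).2 ⟨hrow, hrows⟩
  refine ⟨hsum, ?_⟩
  calc ∑' x, F x = ∑' a, ∑' b, F (a, b) := hsum.tsum_prod' hrow
    _ ≤ ∑' a, N * B a := hrows.tsum_le_tsum hrow_le (hB.mul_left (N:ℝ))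
    _ = N * ∑' a, B a := tsum_mul_left

lemma summable_pow_natAbs {ρ : ℝ} (h0 : 0 ≤ ρ) (h1 : ρ < 1) :
    Summable fun j : ℤ => ρ ^ j.natAbs :=
  .of_nat_of_neg (by simpa using summable_geometric_of_lt_one h0 h1)
    (by simpa using summable_geometric_of_lt_one h0 h1)

lemma summable_tentIncr_and_tsum_le {M : ℝ → ℝ} (hM : ∀ x, 0 ≤ x → 0 ≤ M x)
    (hconv : ConvexOn ℝ (Ici 0) M) (h0 : M 0 = 0) {p q C : ℝ} (hq : 0 ≤ q) (hqp : q < p)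
    (hC0 : 0 < C)
    (hhom : ∀ l : ℝ, 0 < l → ∀ t ∈ Set.Ioc (0:ℝ) 1, C * (M l * t ^ q) ≤ M (l * t))
    {s t : ℝ} {m : ℤ} (hd : 0 < |s - t|) (hm1 : 2 ^ (-(m + 1)) ≤ |s - t|)
    (hm2 : |s - t| ≤ 2 ^ (-m)) :
    Summable (tentIncr M p s t) ∧ ∑' nk, tentIncr M p s t nk
      ≤ 8 * (tentBoundConst p C * M |s - t| * ∑' j : ℤ, tentDecayRatio p q ^ j.natAbs) := by
  set ρ := tentDecayRatio p q
  have hp : p ≠ 0 := by linarith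
  have hvanish : ∀ n k, k ∉ tentWindow n s ∪ tentWindow n t → tentIncr M p s t (n, k) = 0 := by
    intro n k hk
    rw [Finset.mem_union, not_or] at hk
    have hs : tentNK M p n k s = 0 := by
      by_contra h; exact hk.1 (mem_tentWindow_of_tentNK_ne_zero h)
    have ht : tentNK M p n k t = 0 := by
      by_contra h; exact hk.2 (mem_tentWindow_of_tentNK_ne_zero h)
    simp [tentIncr, hs, ht, zero_rpow hp]
  have hcard : ∀ n, (tentWindow n s ∪ tentWindow n t).card ≤ 8 := fun n =>
    (Finset.card_union_le _ _).trans (by rw [card_tentWindow, card_tentWindow])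
  have hB0 : ∀ n : ℤ, 0 ≤ tentBoundConst p C * M |s - t| * ρ ^ (n - m).natAbs := fun n =>
    mul_nonneg (mul_nonneg (by unfold tentBoundConst; positivity) (hM _ hd.le))
      (pow_nonneg (tentDecayRatio_nonneg p q) _)
  have hB : Summable fun n : ℤ => tentBoundConst p C * M |s - t| * ρ ^ (n - m).natAbs :=
    ((summable_pow_natAbs (tentDecayRatio_nonneg p q) (tentDecayRatio_lt_one hqp)).comp_injective
      (Equiv.subRight m).injective).mul_left _
  have h := summable_and_tsum_le_of_rows (tentIncr_nonneg M p s t) hvanish hcard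
    (tentIncr_le hM hconv h0 hq hqp hC0 hhom hd hm1 hm2) hB0 hB
  have hshift : ∑' n : ℤ, ρ ^ (n - m).natAbs = ∑' j : ℤ, ρ ^ j.natAbs :=
    (Equiv.subRight m).tsum_eq fun j : ℤ => ρ ^ j.natAbs
  rwa [tsum_mul_left, hshift, Nat.cast_ofNat] at h

lemma exists_le_tentIncr {M : ℝ → ℝ} (hmono : MonotoneOn M (Ici 0)) (h0 : M 0 = 0) {p : ℝ}
    (hp : 0 < p) {s t : ℝ} {m : ℤ} (hd : 0 < |s - t|) (hm1 : 2 ^ (-(m + 1)) ≤ |s - t|)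
    (hm2 : |s - t| ≤ 2 ^ (-m)) : ∃ nk, M |s - t| ≤ tentIncr M p s t nk := by
  set l : ℝ := 2 ^ (-m) with hl_def
  have hl : 0 < l := zpow_pos two_pos _
  have hlevel : -(m - 1 + 1) = -m := by ring
  have hMl : 0 ≤ M l := h0 ▸ hmono self_mem_Ici hl.le hl.le
  have hMl' : 0 ≤ M (2 ^ (-(m - 1 + 1))) := by rwa [hlevel]
  obtain ⟨k, hk⟩ := exists_abs_tentNK_sub_eq M p (tentCoeff_nonneg p hMl') (x := s) (y := t)
    (by rwa [hlevel])
  have hhalf : 1 / 2 ≤ |s - t| / l := by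
    have hhalf_l : (2:ℝ) ^ (-(m + 1)) = 1 / 2 * l := by
      rw [hl_def, neg_add, zpow_add₀ two_ne_zero, zpow_neg_one]; ring
    rw [le_div_iff₀ hl]
    linarith
  refine ⟨(m - 1, k), ?_⟩
  calc M |s - t| ≤ M l := hmono (mem_Ici.2 (abs_nonneg _)) hl.le hm2
    _ = (2 * (1 / 2)) ^ p * M l := by norm_num
    _ ≤ 2 ^ p * (|s - t| / l) ^ p * M l := by
        rw [mul_rpow zero_le_two (by norm_num)]
        gcongr
    _ = tentIncr M p s t (m - 1, k) := by
        rw [tentIncr, hk, rpow_tentCoeff_mul hp.ne' hMl' hd.le, hlevel]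

theorem stmt_12_general (M : ℝ → ℝ)
    (hmono : MonotoneOn M (Set.Ici 0))
    (hconv : ConvexOn ℝ (Set.Ici 0) M)
    (h0 : M 0 = 0)
    (p q : ℝ) (hq : 1 ≤ q) (hqp : q < p)
    (C : ℝ) (hC0 : 0 < C)
    (hhom : ∀ l : ℝ, 0 < l → ∀ t ∈ Set.Ioc (0:ℝ) 1, C * (M l * t ^ q) ≤ M (l * t)) :
    ∃ A : ℝ, 1 ≤ A ∧ ∀ s t : ℝ,
      M |s - t| ≤ (∑' nk : ℤ × ℤ, |tentNK M p nk.1 nk.2 s - tentNK M p nk.1 nk.2 t| ^ p) ∧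
      (∑' nk : ℤ × ℤ, |tentNK M p nk.1 nk.2 s - tentNK M p nk.1 nk.2 t| ^ p) ≤ A * M |s - t| := by
  have hp : 0 < p := by linarith
  have hM : ∀ x, 0 ≤ x → 0 ≤ M x := fun x hx => h0 ▸ hmono self_mem_Ici hx hx
  set S := ∑' j : ℤ, tentDecayRatio p q ^ j.natAbs
  refine ⟨max 1 (8 * tentBoundConst p C * S), le_max_left _ _, fun s t => ?_⟩
  change M |s - t| ≤ ∑' nk, tentIncr M p s t nk ∧ ∑' nk, tentIncr M p s t nk ≤ _
  rcases eq_or_ne s t with rfl | hst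
  · simp [tentIncr, h0, zero_rpow hp.ne']
  have hd : 0 < |s - t| := abs_pos.2 (sub_ne_zero.2 hst)
  obtain ⟨m, hm1, hm2⟩ : ∃ m : ℤ, 2 ^ (-(m + 1)) ≤ |s - t| ∧ |s - t| ≤ 2 ^ (-m) :=
    ⟨-(Int.log 2 |s - t| + 1), by simpa using Int.zpow_log_le_self one_lt_two hd,
      by simpa using (Int.lt_zpow_succ_log_self one_lt_two |s - t|).le⟩
  obtain ⟨hsum, hupper⟩ :=
    summable_tentIncr_and_tsum_le hM hconv h0 (by linarith) hqp hC0 hhom hd hm1 hm2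
  obtain ⟨nk, hlower⟩ := exists_le_tentIncr hmono h0 hp hd hm1 hm2
  refine ⟨hlower.trans (hsum.le_tsum nk fun _ _ => tentIncr_nonneg M p s t _), hupper.trans ?_⟩
  calc 8 * (tentBoundConst p C * M |s - t| * S) = 8 * tentBoundConst p C * S * M |s - t| := by
        ring
    _ ≤ _ := mul_le_mul_of_nonneg_right (le_max_right _ _) (hM _ hd.le)

/-- For an Orlicz function `M` with `M 1 = 1` satisfying
`M(λt) ≥ C M(λ) t^q` for all `λ > 0`, `t ∈ (0,1]`, with `1 ≤ q < p`, there is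
`A ≥ 1` such that for all `s, t`:
`M(|s-t|) ≤ ∑_{n,k ∈ ℤ} |f_{n,k}(s) - f_{n,k}(t)|^p ≤ A M(|s-t|)`. -/
theorem stmt_12 (M : ℝ → ℝ)
    (hc : ContinuousOn M (Set.Ici 0))
    (hmono : MonotoneOn M (Set.Ici 0))
    (hconv : ConvexOn ℝ (Set.Ici 0) M)
    (h0 : M 0 = 0)
    (h1 : M 1 = 1)
    (hinf : Tendsto M atTop atTop)
    (hnondeg : ∀ t : ℝ, 0 < t → 0 < M t)
    (p q : ℝ) (hq : 1 ≤ q) (hqp : q < p)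
    (C : ℝ) (hC0 : 0 < C) (hC1 : C ≤ 1)
    (hhom : ∀ l : ℝ, 0 < l → ∀ t ∈ Set.Ioc (0:ℝ) 1, C * (M l * t ^ q) ≤ M (l * t)) :
    ∃ A : ℝ, 1 ≤ A ∧ ∀ s t : ℝ,
      M |s - t| ≤ (∑' nk : ℤ × ℤ, |tentNK M p nk.1 nk.2 s - tentNK M p nk.1 nk.2 t| ^ p) ∧
      (∑' nk : ℤ × ℤ, |tentNK M p nk.1 nk.2 s - tentNK M p nk.1 nk.2 t| ^ p) ≤ A * M |s - t| :=
  stmt_12_general M hmono hconv h0 p q hq hqp C hC0 hhom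
end
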